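/- Let w = (π, λ) act K-linearly on K^d by w(e_j) = t^{λ_j} e_{π(j)}, and set L_i = w(Λ_i); assume Λ_l ⊇ L_l ⊇ tΛ_l for all l (which holds when w is μ-permissible). Then for every i ∈ {1,…,d}, the k-linear map L_i/tΛ_i → Λ_{i−1}/tΛ_{i−1} induced by the inclusions L_i ⊆ Λ_i ⊆ Λ_{i−1} is injective if and only if w(e_i) = t e_i, i.e. if and only if π(i) = i and λ_i = 1. -/

import Mathlib

noncomputable section

variable (k : Type*) [Field k] (d : ℕ)

/-- The element `t` of `K = k((t))`, as a Laurent series. -/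
def tK : LaurentSeries k := HahnSeries.single 1 1

/-- The monomial `t^m` of `K = k((t))`, for `m : ℤ`. -/
def tpow (m : ℤ) : LaurentSeries k := HahnSeries.single m 1

/-- The standard basis vector `e_j` of `K^d` (0-indexed: `e_j` here is `e_{j+1}` of the paper). -/
def stdVec (j : Fin d) : Fin d → LaurentSeries k := Pi.single j 1

/-- The standard lattice `Λ_i ⊆ K^d`: the `O = k[[t]]`-submodule generated by
`t e_1, …, t e_i, e_{i+1}, …, e_d` (0-indexed). -/
def Lam (i : ℕ) : Submodule (PowerSeries k) (Fin d → LaurentSeries k) :=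
  Submodule.span _ (Set.range fun j : Fin d =>
    if (j : ℕ) < i then tK k • stdVec k d j else stdVec k d j)

/-- Multiplication by `t` on `K^d`, as an `O`-linear endomorphism. -/
def tMul : (Fin d → LaurentSeries k) →ₗ[PowerSeries k] (Fin d → LaurentSeries k) :=
  (LinearMap.lsmul (LaurentSeries k) (Fin d → LaurentSeries k) (tK k)).restrictScalars
    (PowerSeries k)

/-- The lattice `tΛ_i`. -/
def tLam (i : ℕ) : Submodule (PowerSeries k) (Fin d → LaurentSeries k) :=
  (Lam k d i).map (tMul k d)

/-- The `K`-linear action of `w = (π, λ)` on `K^d`, determined by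
`w(e_j) = t^{λ_j} e_{π(j)}`. -/
def wMap (π : Equiv.Perm (Fin d)) (lam : Fin d → ℤ) :
    (Fin d → LaurentSeries k) →ₗ[LaurentSeries k] (Fin d → LaurentSeries k) :=
  (Pi.basisFun (LaurentSeries k) (Fin d)).constr (LaurentSeries k)
    fun j => tpow k (lam j) • stdVec k d (π j)

/-- The lattice `w(Λ_i)`. -/
def wLam (π : Equiv.Perm (Fin d)) (lam : Fin d → ℤ) (i : ℕ) :
    Submodule (PowerSeries k) (Fin d → LaurentSeries k) :=
  (Lam k d i).map ((wMap k d π lam).restrictScalars (PowerSeries k))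

section Aux

variable {k d}

lemma tpow_mul' (a b : ℤ) : tpow k a * tpow k b = tpow k (a + b) := by
  simp [tpow, HahnSeries.single_mul_single]

lemma tK_eq_tpow : tK k = tpow k 1 := rfl

lemma one_eq_tpow : (1 : LaurentSeries k) = tpow k 0 := by
  simp [tpow]

lemma tpow_mem_span {a b : ℤ} (h : b ≤ a) :
    tpow k a ∈ Submodule.span (PowerSeries k) {tpow k b} := by
  refine Submodule.mem_span_singleton.2 ⟨PowerSeries.X ^ (a - b).toNat, ?_⟩
  rw [Algebra.smul_def, LaurentSeries.coe_algebraMap, HahnSeries.ofPowerSeries_X_pow]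
  rw [tpow, tpow, HahnSeries.single_mul_single, one_mul]
  have ht : ((a - b).toNat : ℤ) = a - b := Int.toNat_of_nonneg (by omega)
  rw [ht, sub_add_cancel]

lemma tpow_not_mem_span {a b : ℤ} (h : a < b) :
    tpow k a ∉ Submodule.span (PowerSeries k) {tpow k b} := by
  intro hmem
  obtain ⟨f, hf⟩ := Submodule.mem_span_singleton.1 hmem
  rw [Algebra.smul_def, LaurentSeries.coe_algebraMap] at hf
  have := congrArg (fun x => HahnSeries.coeff x a) hf
  rw [tpow, tpow] at this
  have hb : a = (a - b) + b := by omega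
  rw [hb, HahnSeries.coeff_mul_single_add] at this
  have h0 : ((f : LaurentSeries k)).coeff (a - b) = 0 := by
    rw [PowerSeries.coeff_coe]
    simp [show a - b < 0 by omega]
  rw [show ((f : LaurentSeries k)) = HahnSeries.ofPowerSeries ℤ k f from rfl] at h0
  rw [h0, zero_mul, HahnSeries.coeff_single_same] at this
  exact one_ne_zero this.symm

lemma mem_span_tpow_mono {a b : ℤ} (h : b ≤ a) {x : LaurentSeries k}
    (hx : x ∈ Submodule.span (PowerSeries k) {tpow k a}) :
    x ∈ Submodule.span (PowerSeries k) {tpow k b} :=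
  (Submodule.span_singleton_le_iff_mem _ _).2 (tpow_mem_span h) hx

lemma tpow_mem_span_iff {a b : ℤ} :
    tpow k a ∈ Submodule.span (PowerSeries k) {tpow k b} ↔ b ≤ a := by
  constructor
  · intro hm
    by_contra hab
    exact tpow_not_mem_span (by omega) hm
  · exact tpow_mem_span

lemma mem_span_diag (c : Fin d → LaurentSeries k) (x : Fin d → LaurentSeries k) :
    x ∈ Submodule.span (PowerSeries k) (Set.range fun j => c j • stdVec k d j) ↔
      ∀ j, x j ∈ Submodule.span (PowerSeries k) {c j} := by
  constructor
  · intro hx j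
    have hle : Submodule.span (PowerSeries k) (Set.range fun j => c j • stdVec k d j) ≤
        Submodule.pi Set.univ (fun j => Submodule.span (PowerSeries k) {c j}) := by
      rw [Submodule.span_le]
      rintro _ ⟨m, rfl⟩ n _
      simp only [stdVec, Pi.smul_apply]
      rcases eq_or_ne n m with rfl | hnm
      · simpa using Submodule.mem_span_singleton_self _
      · simp [Pi.single_eq_of_ne hnm]
    exact hle hx j (Set.mem_univ _)
  · intro hx
    choose a ha using fun j => Submodule.mem_span_singleton.1 (hx j)
    have hxe : x = ∑ j, a j • (c j • stdVec k d j) := by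
      funext m
      simp only [Finset.sum_apply, Pi.smul_apply, stdVec]
      rw [Finset.sum_eq_single m]
      · rw [Pi.single_eq_same, smul_eq_mul, mul_one, ha m]
      · intro j _ hj
        rw [Pi.single_eq_of_ne hj.symm]
        rw [smul_zero, Algebra.smul_def, mul_zero]
      · simp
    rw [hxe]
    exact Submodule.sum_mem _ fun j _ =>
      Submodule.smul_mem _ _ (Submodule.subset_span ⟨j, rfl⟩)

/-- The exponent pattern of the lattice `Λ_i`. -/
def eL (i : ℕ) (j : Fin d) : ℤ := if (j : ℕ) < i then 1 else 0

lemma eL_nonneg (i : ℕ) (j : Fin d) : 0 ≤ eL (d := d) i j := by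
  unfold eL; split <;> omega

lemma eL_le_one (i : ℕ) (j : Fin d) : eL (d := d) i j ≤ 1 := by
  unfold eL; split <;> omega

lemma smul_smul_fun (a b : LaurentSeries k) (v : Fin d → LaurentSeries k) :
    a • b • v = (a * b) • v := by
  funext m
  simp only [Pi.smul_apply, smul_eq_mul, mul_assoc]

lemma Lam_eq_span (i : ℕ) : Lam k d i =
    Submodule.span (PowerSeries k) (Set.range fun j => tpow k (eL i j) • stdVec k d j) := by
  have hfun : (fun j : Fin d => if (j : ℕ) < i then tK k • stdVec k d j else stdVec k d j) =
      fun j : Fin d => tpow k (eL i j) • stdVec k d j := by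
    funext j
    by_cases hj : (j : ℕ) < i
    · rw [if_pos hj, eL, if_pos hj, tK_eq_tpow]
    · rw [if_neg hj, eL, if_neg hj, ← one_eq_tpow, one_smul]
  rw [Lam, hfun]

lemma mem_Lam_iff (i : ℕ) (x : Fin d → LaurentSeries k) :
    x ∈ Lam k d i ↔ ∀ j, x j ∈ Submodule.span (PowerSeries k) {tpow k (eL i j)} := by
  rw [Lam_eq_span, mem_span_diag]

lemma tLam_eq_span (i : ℕ) : tLam k d i =
    Submodule.span (PowerSeries k)
      (Set.range fun j => tpow k (1 + eL i j) • stdVec k d j) := by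
  have hfun : (⇑(tMul k d) ∘ fun j : Fin d => tpow k (eL i j) • stdVec k d j) =
      fun j : Fin d => tpow k (1 + eL i j) • stdVec k d j := by
    funext j
    simp only [Function.comp_apply, tMul, LinearMap.coe_restrictScalars,
      LinearMap.lsmul_apply]
    rw [smul_smul_fun, tK_eq_tpow, tpow_mul']
  rw [tLam, Lam_eq_span, Submodule.map_span, ← Set.range_comp, hfun]

lemma mem_tLam_iff (i : ℕ) (x : Fin d → LaurentSeries k) :
    x ∈ tLam k d i ↔
      ∀ j, x j ∈ Submodule.span (PowerSeries k) {tpow k (1 + eL i j)} := by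
  rw [tLam_eq_span, mem_span_diag]

lemma wLam_eq_span (π : Equiv.Perm (Fin d)) (lam : Fin d → ℤ) (i : ℕ) :
    wLam k d π lam i = Submodule.span (PowerSeries k)
      (Set.range fun m => tpow k (eL i (π.symm m) + lam (π.symm m)) • stdVec k d m) := by
  have h1 : (⇑((wMap k d π lam).restrictScalars (PowerSeries k)) ∘
      fun j : Fin d => tpow k (eL i j) • stdVec k d j) =
      fun j : Fin d => tpow k (eL i j + lam j) • stdVec k d (π j) := by
    funext j
    show wMap k d π lam (tpow k (eL i j) • stdVec k d j) = _
    rw [map_smul]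
    have hb : stdVec k d j = Pi.basisFun (LaurentSeries k) (Fin d) j := by
      rw [Pi.basisFun_apply]; rfl
    rw [hb, wMap, Module.Basis.constr_basis]
    rw [smul_smul_fun, tpow_mul']
  rw [wLam, Lam_eq_span, Submodule.map_span, ← Set.range_comp, h1]
  congr 1
  have h2 : (fun m => tpow k (eL i (π.symm m) + lam (π.symm m)) • stdVec k d m) =
      (fun j => tpow k (eL i j + lam j) • stdVec k d (π j)) ∘ ⇑π.symm := by
    funext m
    simp [Function.comp, Equiv.apply_symm_apply]
  rw [h2, Function.Surjective.range_comp π.symm.surjective]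

lemma mem_wLam_iff (π : Equiv.Perm (Fin d)) (lam : Fin d → ℤ) (i : ℕ)
    (x : Fin d → LaurentSeries k) :
    x ∈ wLam k d π lam i ↔ ∀ m, x m ∈ Submodule.span (PowerSeries k)
      {tpow k (eL i (π.symm m) + lam (π.symm m))} := by
  rw [wLam_eq_span, mem_span_diag]

end Aux

/-- (0-indexed: for `i ∈ {1,…,d}` of the paper, the map
`L_i/tΛ_i → Λ_{i-1}/tΛ_{i-1}` becomes `L_{i+1}/tΛ_{i+1} → Λ_i/tΛ_i` with `i : Fin d`.)
With `L_l = w(Λ_l)` and assuming `Λ_l ⊇ L_l ⊇ tΛ_l` for all `l`, the induced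
`k`-linear map `L_i/tΛ_i → Λ_{i-1}/tΛ_{i-1}` is injective (i.e. every `x ∈ L_i` with
`x ∈ tΛ_{i-1}` already lies in `tΛ_i`) iff `w(e_i) = t e_i`, i.e. iff
`π(i) = i` and `λ_i = 1`. -/
theorem stmt9 (π : Equiv.Perm (Fin d)) (lam : Fin d → ℤ)
    (h : ∀ l : ℕ, l ≤ d → wLam k d π lam l ≤ Lam k d l ∧ tLam k d l ≤ wLam k d π lam l)
    (i : Fin d) :
    (∀ x ∈ wLam k d π lam ((i : ℕ) + 1),
        x ∈ tLam k d (i : ℕ) → x ∈ tLam k d ((i : ℕ) + 1)) ↔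
      (π i = i ∧ lam i = 1) := by
  classical
  obtain ⟨j0, hj0⟩ : ∃ j0 : Fin d, j0 = π.symm i := ⟨_, rfl⟩
  have hπj0 : π j0 = i := by rw [hj0]; exact π.apply_symm_apply i
  -- constraint from permissibility: lam j0 ≤ eL (j0+1) (π j0)
  have hcon : lam j0 ≤ eL ((j0 : ℕ) + 1) (π j0) := by
    have hd : (j0 : ℕ) + 1 ≤ d := j0.isLt
    have h2 := (h ((j0 : ℕ) + 1) hd).2
    have hx : Pi.single (π j0) (tpow k (1 + eL ((j0 : ℕ) + 1) (π j0))) ∈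
        tLam k d ((j0 : ℕ) + 1) := by
      rw [mem_tLam_iff]
      intro m
      rcases eq_or_ne m (π j0) with rfl | hm
      · rw [Pi.single_eq_same]
        exact tpow_mem_span le_rfl
      · rw [Pi.single_eq_of_ne hm]
        exact Submodule.zero_mem _
    have h3 := (mem_wLam_iff π lam _ _).1 (h2 hx) (π j0)
    rw [Pi.single_eq_same, Equiv.symm_apply_apply] at h3
    have h4 := tpow_mem_span_iff.1 h3
    have h5 : eL ((j0 : ℕ) + 1) j0 = 1 := by
      rw [eL, if_pos (by omega)]
    omega
  constructor
  · intro H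
    -- the exponent at coordinate i of wLam (i+1)
    have hA : 2 ≤ eL ((i : ℕ) + 1) j0 + lam j0 := by
      by_contra hA
      push_neg at hA
      set x : Fin d → LaurentSeries k := Pi.single i (tpow k 1) with hxdef
      have hxw : x ∈ wLam k d π lam ((i : ℕ) + 1) := by
        rw [mem_wLam_iff]
        intro m
        rcases eq_or_ne m i with rfl | hm
        · rw [hxdef, Pi.single_eq_same, ← hj0]
          exact tpow_mem_span (by omega)
        · rw [hxdef, Pi.single_eq_of_ne hm]
          exact Submodule.zero_mem _
      have hxt : x ∈ tLam k d (i : ℕ) := by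
        rw [mem_tLam_iff]
        intro m
        rcases eq_or_ne m i with rfl | hm
        · rw [hxdef, Pi.single_eq_same]
          refine tpow_mem_span ?_
          rw [eL, if_neg (lt_irrefl _)]
          omega
        · rw [hxdef, Pi.single_eq_of_ne hm]
          exact Submodule.zero_mem _
      have := (mem_tLam_iff _ _).1 (H x hxw hxt) i
      rw [hxdef, Pi.single_eq_same] at this
      have h6 := tpow_mem_span_iff.1 this
      rw [eL, if_pos (by omega)] at h6
      omega
    have hle1 : eL ((i : ℕ) + 1) j0 ≤ 1 := eL_le_one _ _
    have hle2 : eL ((j0 : ℕ) + 1) (π j0) ≤ 1 := eL_le_one _ _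
    have hlam1 : lam j0 = 1 := by omega
    have he1 : eL ((i : ℕ) + 1) j0 = 1 := by omega
    have hji : (j0 : ℕ) < (i : ℕ) + 1 := by
      by_contra hc
      rw [eL, if_neg hc] at he1
      omega
    have hij : ((π j0 : ℕ)) < (j0 : ℕ) + 1 := by
      by_contra hc
      rw [eL, if_neg hc] at hcon
      omega
    rw [hπj0] at hij
    have hj0i : j0 = i := Fin.ext (by omega)
    rw [hj0i] at hπj0 hlam1
    exact ⟨hπj0, hlam1⟩
  · rintro ⟨hπi, hlami⟩
    have hsymm : π.symm i = i := (Equiv.symm_apply_eq π).2 hπi.symm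
    intro x hxw hxt
    rw [mem_tLam_iff]
    intro m
    rcases eq_or_ne m i with rfl | hm
    · have h7 := (mem_wLam_iff π lam _ _).1 hxw m
      rw [hsymm, hlami] at h7
      refine mem_span_tpow_mono ?_ h7
      have : eL ((m : ℕ) + 1) m = 1 := by rw [eL, if_pos (by omega)]
      omega
    · have h8 := (mem_tLam_iff _ _).1 hxt m
      refine mem_span_tpow_mono ?_ h8
      have hmne : (m : ℕ) ≠ (i : ℕ) := fun hc => hm (Fin.ext hc)
      have : eL ((i : ℕ) + 1) m = eL (i : ℕ) m := by
        rw [eL, eL]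
        rcases lt_or_ge ((m : ℕ)) (i : ℕ) with hlt | hge
        · rw [if_pos hlt, if_pos (by omega)]
        · rw [if_neg (by omega), if_neg (by omega)]
      omega
end
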